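/- arXiv:2309.14730 — 3 statements merged into one kernel-verified Lean document; each statement's English description precedes it below -/
import Mathlib

section
/- Let P be a finite set of real numbers. Define the greedy clustering: repeatedly take the smallest unassigned point x of P and form the cluster P ∩ [x, x+1]. Then every cluster produced has diameter at most 1, and the number of clusters produced equals the minimum number of sets of diameter at most 1 needed to partition P. -/
open scoped Classical

/-- A clustering of a finite set `P ⊆ ℝ`: a partition of `P` into nonempty
subsets, each of diameter at most 1. -/
def IsClustering (P : Finset ℝ) (𝒞 : Finset (Finset ℝ)) : Prop :=
  (∀ C ∈ 𝒞, C.Nonempty ∧ C ⊆ P ∧ ∀ a ∈ C, ∀ b ∈ C, |a - b| ≤ 1) ∧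
  ∀ p ∈ P, ∃! C, C ∈ 𝒞 ∧ p ∈ C

/-- The minimum number of clusters of diameter at most 1 needed to partition `P`. -/
noncomputable def minClusters (P : Finset ℝ) : ℕ :=
  sInf {n | ∃ 𝒞 : Finset (Finset ℝ), IsClustering P 𝒞 ∧ 𝒞.card = n}

/-- The greedy left-to-right clustering: repeatedly take the smallest unassigned
point `x` and form the cluster `P ∩ [x, x+1]`. -/
noncomputable def greedyClusters (P : Finset ℝ) : List (Finset ℝ) :=
  if h : P.Nonempty then
    let x := P.min' h
    {y ∈ P | y ≤ x + 1} :: greedyClusters {y ∈ P | ¬ y ≤ x + 1}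
  else []
termination_by P.card
decreasing_by
  exact Finset.card_lt_card
    (Finset.filter_ssubset.2 ⟨P.min' h, P.min'_mem h, by simp⟩)

lemma greedy_card_lt (P : Finset ℝ) (h : P.Nonempty) :
    ({y ∈ P | ¬ y ≤ P.min' h + 1} : Finset ℝ).card < P.card :=
  Finset.card_lt_card
    (Finset.filter_ssubset.2 ⟨P.min' h, P.min'_mem h, by simp⟩)

lemma greedy_unfold (P : Finset ℝ) (h : P.Nonempty) :
    greedyClusters P =
      {y ∈ P | y ≤ P.min' h + 1} :: greedyClusters {y ∈ P | ¬ y ≤ P.min' h + 1} := by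
  rw [greedyClusters, dif_pos h]

theorem greedy_spec (P : Finset ℝ) :
    (∀ C ∈ greedyClusters P, C.Nonempty ∧ C ⊆ P ∧ ∀ a ∈ C, ∀ b ∈ C, |a - b| ≤ 1) ∧
    (greedyClusters P).Nodup ∧
    (∀ p ∈ P, ∃! C, C ∈ greedyClusters P ∧ p ∈ C) := by
  by_cases h : P.Nonempty
  · have hcard := greedy_card_lt P h
    set x := P.min' h with hx
    set P' : Finset ℝ := {y ∈ P | ¬ y ≤ x + 1} with hP'
    have IH := greedy_spec P'
    have hunfold := greedy_unfold P h
    rw [← hx, ← hP'] at hunfold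
    set C0 : Finset ℝ := {y ∈ P | y ≤ x + 1} with hC0
    have hxC0 : x ∈ C0 := by
      simp only [hC0, Finset.mem_filter]
      exact ⟨P.min'_mem h, by linarith⟩
    have hC0diam : ∀ a ∈ C0, ∀ b ∈ C0, |a - b| ≤ 1 := by
      intro a ha b hb
      simp only [hC0, Finset.mem_filter] at ha hb
      have h1 := P.min'_le a ha.1
      have h2 := P.min'_le b hb.1
      rw [abs_sub_le_iff]
      constructor <;> [linarith [ha.2]; linarith [hb.2]]
    have hsubP' : ∀ C ∈ greedyClusters P', C ⊆ P' := fun C hC => (IH.1 C hC).2.1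
    refine ⟨?_, ?_, ?_⟩
    · intro C hC
      rw [hunfold] at hC
      rcases List.mem_cons.1 hC with rfl | hC
      · exact ⟨⟨x, hxC0⟩, Finset.filter_subset _ _, hC0diam⟩
      · obtain ⟨hne, hsub, hd⟩ := IH.1 C hC
        exact ⟨hne, hsub.trans (Finset.filter_subset _ _), hd⟩
    · rw [hunfold]
      refine List.nodup_cons.2 ⟨?_, IH.2.1⟩
      intro hmem
      have := hsubP' C0 hmem hxC0
      simp only [hP', Finset.mem_filter] at this
      exact this.2 (by linarith)
    · intro p hp
      rw [hunfold]
      by_cases hple : p ≤ x + 1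
      · refine ⟨C0, ⟨List.mem_cons_self, by simp [hC0, hp, hple]⟩, ?_⟩
        rintro D ⟨hD, hpD⟩
        rcases List.mem_cons.1 hD with rfl | hD
        · rfl
        · have := hsubP' D hD hpD
          simp only [hP', Finset.mem_filter] at this
          exact absurd hple this.2
      · have hp' : p ∈ P' := Finset.mem_filter.2 ⟨hp, hple⟩
        obtain ⟨C, ⟨hC, hpC⟩, huniq⟩ := IH.2.2 p hp'
        refine ⟨C, ⟨List.mem_cons_of_mem _ hC, hpC⟩, ?_⟩
        rintro D ⟨hD, hpD⟩
        rcases List.mem_cons.1 hD with rfl | hD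
        · simp only [hC0, Finset.mem_filter] at hpD
          exact absurd hpD.2 hple
        · exact huniq D ⟨hD, hpD⟩
  · rw [greedyClusters, dif_neg h]
    simp only [Finset.not_nonempty_iff_eq_empty] at h
    subst h
    simp
termination_by P.card
decreasing_by
  exact Finset.card_lt_card
    (Finset.filter_ssubset.2 ⟨P.min' h, P.min'_mem h, by simp⟩)

theorem greedy_lower (P : Finset ℝ) (𝒞 : Finset (Finset ℝ)) (hC : IsClustering P 𝒞) :
    (greedyClusters P).length ≤ 𝒞.card := by
  by_cases h : P.Nonempty
  · have hcard := greedy_card_lt P h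
    set x := P.min' h with hx
    set P' : Finset ℝ := {y ∈ P | ¬ y ≤ x + 1} with hP'
    obtain ⟨C0, ⟨hC0, hx0⟩, _⟩ := hC.2 x (P.min'_mem h)
    set f : Finset ℝ → Finset ℝ := fun C => C.filter (fun y => ¬ y ≤ x + 1) with hf
    set 𝒞' : Finset (Finset ℝ) := (𝒞.image f).erase ∅ with h𝒞'
    have hmemf : ∀ C : Finset ℝ, ∀ y, y ∈ f C ↔ y ∈ C ∧ ¬ y ≤ x + 1 := by
      intro C y; simp [hf]
    have hclus' : IsClustering P' 𝒞' := by
      constructor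
      · intro C' hC'
        obtain ⟨hne, hmem⟩ := Finset.mem_erase.1 hC'
        obtain ⟨D, hD, rfl⟩ := Finset.mem_image.1 hmem
        obtain ⟨_, hDsub, hDd⟩ := hC.1 D hD
        refine ⟨Finset.nonempty_iff_ne_empty.2 hne, ?_, ?_⟩
        · intro y hy
          rw [hmemf] at hy
          simp only [hP', Finset.mem_filter]
          exact ⟨hDsub hy.1, hy.2⟩
        · intro a ha b hb
          rw [hmemf] at ha hb
          exact hDd a ha.1 b hb.1
      · intro p hp
        simp only [hP', Finset.mem_filter] at hp
        obtain ⟨C, ⟨hCm, hpC⟩, huniq⟩ := hC.2 p hp.1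
        have hpfC : p ∈ f C := (hmemf C p).2 ⟨hpC, hp.2⟩
        refine ⟨f C, ⟨Finset.mem_erase.2 ⟨?_, Finset.mem_image_of_mem f hCm⟩, hpfC⟩, ?_⟩
        · intro he; rw [he] at hpfC; exact absurd hpfC (Finset.notMem_empty p)
        · rintro D' ⟨hD', hpD'⟩
          obtain ⟨_, hmem⟩ := Finset.mem_erase.1 hD'
          obtain ⟨D, hD, rfl⟩ := Finset.mem_image.1 hmem
          rw [hmemf] at hpD'
          rw [huniq D ⟨hD, hpD'.1⟩]
    have IH := greedy_lower P' 𝒞' hclus'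
    have hfC0 : f C0 = ∅ := by
      rw [Finset.eq_empty_iff_forall_notMem]
      intro y hy
      rw [hmemf] at hy
      have := (hC.1 C0 hC0).2.2 y hy.1 x hx0
      rw [abs_sub_le_iff] at this
      exact hy.2 (by linarith [this.1])
    have hempty : (∅ : Finset ℝ) ∈ 𝒞.image f := hfC0 ▸ Finset.mem_image_of_mem f hC0
    have hcard' : 𝒞'.card + 1 ≤ 𝒞.card := by
      have h1 : 𝒞'.card = (𝒞.image f).card - 1 := Finset.card_erase_of_mem hempty
      have h2 : (𝒞.image f).card ≤ 𝒞.card := Finset.card_image_le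
      have h3 : 1 ≤ (𝒞.image f).card := Finset.card_pos.2 ⟨∅, hempty⟩
      omega
    have hlen : (greedyClusters P).length = (greedyClusters P').length + 1 := by
      rw [greedy_unfold P h, ← hx, ← hP']; simp
    omega
  · rw [greedyClusters, dif_neg h]
    simp
termination_by P.card
decreasing_by
  exact Finset.card_lt_card
    (Finset.filter_ssubset.2 ⟨P.min' h, P.min'_mem h, by simp⟩)

theorem stmt3 (P : Finset ℝ) :
    (∀ C ∈ greedyClusters P, ∀ a ∈ C, ∀ b ∈ C, |a - b| ≤ 1) ∧
    (greedyClusters P).length = minClusters P := by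
  obtain ⟨hprop, hnd, huniq⟩ := greedy_spec P
  refine ⟨fun C hC => (hprop C hC).2.2, ?_⟩
  have hclusg : IsClustering P (greedyClusters P).toFinset := by
    constructor
    · intro C hC; exact hprop C (List.mem_toFinset.1 hC)
    · intro p hp
      obtain ⟨C, ⟨hC, hpC⟩, hu⟩ := huniq p hp
      exact ⟨C, ⟨List.mem_toFinset.2 hC, hpC⟩, fun D ⟨hD, hpD⟩ =>
        hu D ⟨List.mem_toFinset.1 hD, hpD⟩⟩
  have hcardg : (greedyClusters P).toFinset.card = (greedyClusters P).length :=
    List.toFinset_card_of_nodup hnd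
  refine le_antisymm ?_ ?_
  · exact le_csInf ⟨_, ⟨_, hclusg, hcardg⟩⟩
      (by rintro n ⟨𝒞, h𝒞, rfl⟩; exact greedy_lower P 𝒞 h𝒞)
  · exact Nat.sInf_le ⟨_, hclusg, hcardg⟩
end

section
/- For a finite set P ⊆ ℝ and any integer z, at most two clusters of the greedy left-to-right optimal clustering contain a point of the half-open interval [z, z+1). -/
open scoped Classical

def sepRel (C D : Finset ℝ) : Prop :=
  ∃ x, x ∈ C ∧ (∀ p ∈ C, p ≤ x + 1) ∧ ∀ q ∈ D, x + 1 < q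

theorem greedy_subset (P : Finset ℝ) : ∀ C ∈ greedyClusters P, C ⊆ P := by
  rw [greedyClusters]
  split
  next h =>
    intro C hC
    rcases List.mem_cons.1 hC with rfl | h'
    · exact Finset.filter_subset _ _
    · exact (greedy_subset _ _ h').trans (Finset.filter_subset _ _)
  · simp
termination_by P.card
decreasing_by
  exact Finset.card_lt_card
    (Finset.filter_ssubset.2 ⟨P.min' ‹P.Nonempty›, P.min'_mem _, by simp⟩)

theorem greedy_pairwise (P : Finset ℝ) :
    List.Pairwise sepRel (greedyClusters P) := by
  rw [greedyClusters]
  split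
  next h =>
    refine List.Pairwise.cons ?_ (greedy_pairwise _)
    intro D hD
    refine ⟨P.min' h, Finset.mem_filter.2 ⟨P.min'_mem h, by simp⟩,
      fun p hp => (Finset.mem_filter.1 hp).2, fun q hq => ?_⟩
    have := Finset.mem_filter.1 (greedy_subset _ D hD hq)
    exact lt_of_not_ge this.2
  · exact List.Pairwise.nil
termination_by P.card
decreasing_by
  exact Finset.card_lt_card
    (Finset.filter_ssubset.2 ⟨P.min' ‹P.Nonempty›, P.min'_mem _, by simp⟩)

theorem chain_contra {A B C : Finset ℝ} {z : ℤ} (hAB : sepRel A B) (hBC : sepRel B C)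
    {pa pc : ℝ} (hpa : pa ∈ A) (hpc : pc ∈ C)
    (h1 : (z : ℝ) ≤ pa) (h2 : pc < z + 1) : False := by
  obtain ⟨x, hxA, hA, hB⟩ := hAB
  obtain ⟨y, hyB, hBle, hC⟩ := hBC
  have h3 : x + 1 < y := hB y hyB
  have h4 : y + 1 < pc := hC pc hpc
  have h5 : pa ≤ x + 1 := hA pa hpa
  linarith

/-- For any integer `z`, at most two clusters of the greedy clustering contain a
point of the half-open interval `[z, z+1)`. -/
theorem stmt4 (P : Finset ℝ) (z : ℤ) :
    ((greedyClusters P).toFinset.filter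
      (fun C => ∃ p ∈ C, (z : ℝ) ≤ p ∧ p < z + 1)).card ≤ 2 := by
  by_contra hcard
  push_neg at hcard
  obtain ⟨s, hs, hs3⟩ := Finset.exists_subset_card_eq hcard
  obtain ⟨a, b, c, hab, hac, hbc, rfl⟩ := Finset.card_eq_three.1 hs3
  have hmem : ∀ x ∈ ({a, b, c} : Finset (Finset ℝ)),
      x ∈ greedyClusters P ∧ ∃ p ∈ x, (z : ℝ) ≤ p ∧ p < z + 1 := by
    intro x hx
    have := Finset.mem_filter.1 (hs hx)
    exact ⟨List.mem_toFinset.1 this.1, this.2⟩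
  obtain ⟨hal, pa, hpa, hpa1, hpa2⟩ := hmem a (by simp)
  obtain ⟨hbl, pb, hpb, hpb1, hpb2⟩ := hmem b (by simp)
  obtain ⟨hcl, pc, hpc, hpc1, hpc2⟩ := hmem c (by simp)
  have hpw := greedy_pairwise P
  have hpw' := by
    haveI : Std.Symm (fun x y : Finset ℝ => x ≠ y → sepRel x y ∨ sepRel y x) :=
      ⟨fun x y h hne => (h hne.symm).symm⟩
    exact List.Pairwise.forall
      (R := fun x y : Finset ℝ => x ≠ y → sepRel x y ∨ sepRel y x)
      (hpw.imp fun h _ => Or.inl h)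
  rcases hpw' hal hbl hab hab with h1 | h1 <;>
  rcases hpw' hbl hcl hbc hbc with h2 | h2 <;>
  rcases hpw' hal hcl hac hac with h3 | h3
  · exact chain_contra h1 h2 hpa hpc hpa1 hpc2
  · exact chain_contra h1 h2 hpa hpc hpa1 hpc2
  · exact chain_contra h3 h2 hpa hpb hpa1 hpb2
  · exact chain_contra h3 h1 hpc hpb hpc1 hpb2
  · exact chain_contra h1 h3 hpb hpc hpb1 hpc2
  · exact chain_contra h2 h3 hpb hpa hpb1 hpa2
  · exact chain_contra h2 h1 hpc hpa hpc1 hpa2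
  · exact chain_contra h2 h1 hpc hpa hpc1 hpa2
end

section
/- Let m, d ≥ 1 and for each j ∈ {−1, 0, 1}^{m·d} define a finite point set in ℝ^d as in the block construction: blocks centered at 4i·e₁ with points 4i·e₁ ± 0.5·e_ℓ and, when j_k ≠ 0 (k = (i−1)d + ℓ), additional points 4i·e₁ + (0.1·j_k − 1)·e_ℓ and 4i·e₁ + (0.1·j_k + 1)·e_ℓ. Then distinct choices of j yield point sets whose optimal clusterings induce distinct clusterings on the common core {4i·e₁, 4i·e₁ ± 0.5·e_ℓ}. -/
open scoped Classical

/-- A clustering of a finite set `P ⊆ ℝ^d` (sup norm): a partition of `P` into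
nonempty subsets, each of sup-norm diameter at most 1. -/
def IsClusteringPi (d : ℕ) (P : Finset (Fin d → ℝ)) (𝒞 : Finset (Finset (Fin d → ℝ))) : Prop :=
  (∀ C ∈ 𝒞, C.Nonempty ∧ C ⊆ P ∧ ∀ a ∈ C, ∀ b ∈ C, dist a b ≤ 1) ∧
  ∀ p ∈ P, ∃! C, C ∈ 𝒞 ∧ p ∈ C

/-- The minimum number of clusters of diameter at most 1 needed to partition `P`. -/
noncomputable def minClustersPi (d : ℕ) (P : Finset (Fin d → ℝ)) : ℕ :=
  sInf {n | ∃ 𝒞, IsClusteringPi d P 𝒞 ∧ 𝒞.card = n}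

/-- The point `x·e₁ + y·e_ℓ` of `ℝ^d` (`e₁` is the first standard unit vector). -/
def pt (d : ℕ) (hd : 0 < d) (x : ℝ) (ℓ : Fin d) (y : ℝ) : Fin d → ℝ :=
  fun t => (if t = ⟨0, hd⟩ then x else 0) + (if t = ℓ then y else 0)

/-- The common core: for each block `1 ≤ i ≤ m`, the points
`4i·e₁` and `4i·e₁ ± 0.5·e_ℓ` for every `1 ≤ ℓ ≤ d`. -/
noncomputable def core (m d : ℕ) (hd : 0 < d) : Finset (Fin d → ℝ) :=
  (Finset.Icc 1 m).biUnion fun i =>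
    {pt d hd (4 * i) ⟨0, hd⟩ 0} ∪
      Finset.univ.biUnion fun ℓ : Fin d =>
        {pt d hd (4 * i) ℓ (-0.5), pt d hd (4 * i) ℓ 0.5}

/-- The full point set `P_j`: the core together with, for each `i, ℓ` with
`j_k ≠ 0` (`k = (i−1)d + ℓ`), the points `4i·e₁ + (0.1·j_k ± 1)·e_ℓ`. -/
noncomputable def pointSet (m d : ℕ) (hd : 0 < d) (j : ℕ → ℤ) : Finset (Fin d → ℝ) :=
  core m d hd ∪
    (Finset.Icc 1 m).biUnion fun i =>
      Finset.univ.biUnion fun ℓ : Fin d =>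
        if j ((i - 1) * d + ℓ.val) = 0 then ∅
        else
          {pt d hd (4 * i) ℓ (0.1 * j ((i - 1) * d + ℓ.val) - 1),
           pt d hd (4 * i) ℓ (0.1 * j ((i - 1) * d + ℓ.val) + 1)}

/-- The clustering induced on a subset `S` by a clustering `𝒞`. -/
noncomputable def restrict (d : ℕ) (𝒞 : Finset (Finset (Fin d → ℝ)))
    (S : Finset (Fin d → ℝ)) : Finset (Finset (Fin d → ℝ)) :=
  (𝒞.image fun C => C ∩ S).filter Finset.Nonempty

/-! The far points, i.e. the block centres `4i·e₁` and the points `4i·e₁ + 1.1·j_k·e_ℓ` with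
`j_k ≠ 0`, are pairwise more than `1` apart, and the point set is covered by equally many sets of
diameter at most `1`. Hence every cluster of an optimal clustering contains exactly one far point.
If `j_k = s ∈ {±1}`, the point `4i·e₁ - 0.9·s·e_ℓ` is within `1` of no far point but the centre,
so it shares the centre's cluster and pushes `4i·e₁ + 0.5·s·e_ℓ` (at distance `1.4`) out of it;
if `j_k ≠ s`, the point `4i·e₁ + 0.5·s·e_ℓ` itself can only join the centre. So the clustering
induced on the core determines every `j_k`. -/

section Clustering

variable {d : ℕ} {P : Finset (Fin d → ℝ)} {𝒞 : Finset (Finset (Fin d → ℝ))}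

lemma IsClusteringPi.eq_of_mem (h𝒞 : IsClusteringPi d P 𝒞) {C C' : Finset (Fin d → ℝ)}
    (hC : C ∈ 𝒞) (hC' : C' ∈ 𝒞) {p : Fin d → ℝ} (hpC : p ∈ C) (hpC' : p ∈ C') : C = C' :=
  (h𝒞.2 p ((h𝒞.1 C hC).2.1 hpC)).unique ⟨hC, hpC⟩ ⟨hC', hpC'⟩

lemma IsClusteringPi.exists_apply_mem_of_card_le (h𝒞 : IsClusteringPi d P 𝒞) {α : Type*}
    {I : Finset α} {F : α → Fin d → ℝ} (hFP : ∀ a ∈ I, F a ∈ P)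
    (hsep : (I : Set α).Pairwise fun a b => 1 < dist (F a) (F b)) (hcard : 𝒞.card ≤ I.card) :
    ∀ C ∈ 𝒞, ∃ a ∈ I, F a ∈ C := by
  choose g hg𝒞 hFg using fun a (ha : a ∈ I) => (h𝒞.2 (F a) (hFP a ha)).exists
  have hinj : ∀ a b ha hb, g a ha = g b hb → a = b := by
    intro a b ha hb hab
    by_contra hne
    have hFb := hFg b hb
    rw [← hab] at hFb
    exact (hsep ha hb hne).not_ge ((h𝒞.1 _ (hg𝒞 a ha)).2.2 _ (hFg a ha) _ hFb)
  intro C hC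
  obtain ⟨a, ha, rfl⟩ := Finset.surj_on_of_inj_on_of_card_le g hg𝒞 hinj hcard C hC
  exact ⟨a, ha, hFg a ha⟩

lemma minClustersPi_le_card_of_cover (𝒢 : Finset (Set (Fin d → ℝ)))
    (hdiam : ∀ G ∈ 𝒢, ∀ x ∈ G, ∀ y ∈ G, dist x y ≤ 1) (hcover : ∀ p ∈ P, ∃ G ∈ 𝒢, p ∈ G) :
    minClustersPi d P ≤ 𝒢.card := by
  choose! φ hφ𝒢 hpφ using hcover
  let cluster : Set (Fin d → ℝ) → Finset (Fin d → ℝ) := fun G => P.filter (φ · = G)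
  have hclustering : IsClusteringPi d P ((P.image φ).image cluster) := by
    simp only [IsClusteringPi, Finset.mem_image]
    refine ⟨?_, fun p hp => ⟨cluster (φ p), ⟨⟨φ p, ⟨p, hp, rfl⟩, rfl⟩, by simp [cluster, hp]⟩, ?_⟩⟩
    · rintro _ ⟨_, ⟨p, hp, rfl⟩, rfl⟩
      refine ⟨⟨p, by simp [cluster, hp]⟩, Finset.filter_subset _ _, fun x hx y hy => ?_⟩
      simp only [cluster, Finset.mem_filter] at hx hy
      refine hdiam (φ p) (hφ𝒢 p hp) x ?_ y ?_
      · exact hx.2 ▸ hpφ x hx.1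
      · exact hy.2 ▸ hpφ y hy.1
    · rintro _ ⟨⟨_, ⟨q, -, rfl⟩, rfl⟩, hpq⟩
      simp only [cluster, Finset.mem_filter] at hpq
      rw [hpq.2]
  calc minClustersPi d P ≤ ((P.image φ).image cluster).card := Nat.sInf_le ⟨_, hclustering, rfl⟩
    _ ≤ (P.image φ).card := Finset.card_image_le
    _ ≤ 𝒢.card := Finset.card_le_card (Finset.image_subset_iff.2 hφ𝒢)

end Clustering

lemma exists_mem_restrict_iff {d : ℕ} (𝒞 : Finset (Finset (Fin d → ℝ))) {S : Finset (Fin d → ℝ)}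
    {a b : Fin d → ℝ} (ha : a ∈ S) (hb : b ∈ S) :
    (∃ D ∈ restrict d 𝒞 S, a ∈ D ∧ b ∈ D) ↔ ∃ C ∈ 𝒞, a ∈ C ∧ b ∈ C := by
  simp only [restrict, Finset.mem_filter, Finset.mem_image]
  constructor
  · rintro ⟨_, ⟨⟨C, hC, rfl⟩, -⟩, haC, hbC⟩
    exact ⟨C, hC, (Finset.mem_inter.1 haC).1, (Finset.mem_inter.1 hbC).1⟩
  · rintro ⟨C, hC, haC, hbC⟩
    exact ⟨C ∩ S, ⟨⟨C, hC, rfl⟩, a, Finset.mem_inter.2 ⟨haC, ha⟩⟩,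
      Finset.mem_inter.2 ⟨haC, ha⟩, Finset.mem_inter.2 ⟨hbC, hb⟩⟩

section Points

variable {d : ℕ} (hd : 0 < d)

lemma pt_sub_pt (x x' : ℝ) (ℓ ℓ' : Fin d) (y y' : ℝ) :
    pt d hd x ℓ y - pt d hd x' ℓ' y' =
      Pi.single ⟨0, hd⟩ (x - x') + (Pi.single ℓ y - Pi.single ℓ' y') := by
  ext t
  simp only [pt, Pi.sub_apply, Pi.add_apply, Pi.single_apply]
  split_ifs <;> ring

lemma pt_zero_eq (x : ℝ) (ℓ ℓ' : Fin d) : pt d hd x ℓ 0 = pt d hd x ℓ' 0 := by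
  ext t; simp [pt]

lemma dist_pt_pt_self (x : ℝ) (ℓ : Fin d) (y y' : ℝ) :
    dist (pt d hd x ℓ y) (pt d hd x ℓ y') = |y - y'| := by
  rw [dist_eq_norm, pt_sub_pt, sub_self, Pi.single_zero, zero_add, ← Pi.single_sub,
    Pi.norm_single, Real.norm_eq_abs]

lemma dist_pt_pt_of_ne (x : ℝ) {ℓ ℓ' : Fin d} (h : ℓ ≠ ℓ') (y y' : ℝ) :
    dist (pt d hd x ℓ y) (pt d hd x ℓ' y') = max |y| |y'| := by
  rw [dist_eq_norm, pt_sub_pt, sub_self, Pi.single_zero, zero_add]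
  refine le_antisymm ((pi_norm_le_iff_of_nonneg (by positivity)).2 fun t => ?_) (max_le ?_ ?_)
  · by_cases htℓ : t = ℓ
    · subst htℓ; simp [h]
    · by_cases htℓ' : t = ℓ'
      · subst htℓ'; simp [Ne.symm h]
      · simp [htℓ, htℓ']
  · have := norm_le_pi_norm (Pi.single ℓ y - Pi.single ℓ' y' : Fin d → ℝ) ℓ
    rwa [Pi.sub_apply, Pi.single_eq_same, Pi.single_eq_of_ne h, sub_zero] at this
  · have := norm_le_pi_norm (Pi.single ℓ y - Pi.single ℓ' y' : Fin d → ℝ) ℓ'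
    rwa [Pi.sub_apply, Pi.single_eq_same, Pi.single_eq_of_ne h.symm, zero_sub, norm_neg] at this

lemma one_lt_dist_pt_pt {x x' : ℝ} (ℓ ℓ' : Fin d) {y y' : ℝ} (h : |y| + |y'| + 1 < |x - x'|) :
    1 < dist (pt d hd x ℓ y) (pt d hd x' ℓ' y') := by
  have hcoord := norm_le_pi_norm (pt d hd x ℓ y - pt d hd x' ℓ' y') ⟨0, hd⟩
  rw [← dist_eq_norm] at hcoord
  simp only [Pi.sub_apply, pt, ↓reduceIte, Real.norm_eq_abs] at hcoord
  set a := if (⟨0, hd⟩ : Fin d) = ℓ then y else 0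
  set b := if (⟨0, hd⟩ : Fin d) = ℓ' then y' else 0
  have ha : |a| ≤ |y| := by simp only [a]; split_ifs <;> simp
  have hb : |b| ≤ |y'| := by simp only [b]; split_ifs <;> simp
  have hsplit := abs_sub (x + a - (x' + b)) (a - b)
  rw [show x + a - (x' + b) - (a - b) = x - x' by ring] at hsplit
  linarith [abs_sub a b]

lemma one_lt_dist_pt_pt_of_ne {i i' : ℕ} (h : i ≠ i') (ℓ ℓ' : Fin d) {y y' : ℝ}
    (hy : |y| ≤ 1.1) (hy' : |y'| ≤ 1.1) :
    1 < dist (pt d hd (4 * i) ℓ y) (pt d hd (4 * i') ℓ' y') := by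
  refine one_lt_dist_pt_pt hd ℓ ℓ' ?_
  have : (1 : ℝ) ≤ |(i : ℝ) - i'| := by
    rcases h.lt_or_gt with h | h
    · rw [abs_sub_comm, le_abs]; left; linarith [show ((i : ℝ) + 1 ≤ i') by exact_mod_cast h]
    · rw [le_abs]; left; linarith [show ((i' : ℝ) + 1 ≤ i) by exact_mod_cast h]
  rw [← mul_sub, abs_mul, abs_of_pos (four_pos : (0 : ℝ) < 4)]
  linarith

end Points

def adviceIndex (d i : ℕ) (ℓ : Fin d) : ℕ := (i - 1) * d + ℓ

lemma exists_adviceIndex_eq {m d k : ℕ} (hk : k < m * d) :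
    ∃ i ∈ Finset.Icc 1 m, ∃ ℓ : Fin d, adviceIndex d i ℓ = k := by
  have hd : 0 < d := Nat.pos_of_ne_zero fun h => by simp [h] at hk
  refine ⟨k / d + 1, Finset.mem_Icc.2 ⟨le_add_self, ?_⟩, ⟨k % d, Nat.mod_lt k hd⟩, ?_⟩
  · exact Nat.succ_le_of_lt ((Nat.div_lt_iff_lt_mul hd).2 hk)
  · simp [adviceIndex, Nat.div_add_mod']

section Construction

variable (m : ℕ) {d : ℕ} (hd : 0 < d) (j : ℕ → ℤ)

lemma mem_core_iff {p : Fin d → ℝ} :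
    p ∈ core m d hd ↔ ∃ i ∈ Finset.Icc 1 m, ∃ ℓ y, p = pt d hd (4 * i) ℓ y ∧
      (y = 0 ∨ y = -0.5 ∨ y = 0.5) := by
  simp only [core, Finset.mem_biUnion, Finset.mem_union, Finset.mem_singleton,
    Finset.mem_insert, Finset.mem_univ, true_and]
  refine exists_congr fun i => and_congr_right fun _ => ⟨?_, ?_⟩
  · rintro (rfl | ⟨ℓ, rfl | rfl⟩)
    · exact ⟨_, 0, rfl, Or.inl rfl⟩
    · exact ⟨ℓ, _, rfl, Or.inr (Or.inl rfl)⟩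
    · exact ⟨ℓ, _, rfl, Or.inr (Or.inr rfl)⟩
  · rintro ⟨ℓ, y, rfl, rfl | rfl | rfl⟩
    · exact Or.inl (pt_zero_eq hd _ _ _)
    · exact Or.inr ⟨ℓ, Or.inl rfl⟩
    · exact Or.inr ⟨ℓ, Or.inr rfl⟩

lemma mem_pointSet_iff {p : Fin d → ℝ} :
    p ∈ pointSet m d hd j ↔ ∃ i ∈ Finset.Icc 1 m, ∃ ℓ y, p = pt d hd (4 * i) ℓ y ∧
      (y = 0 ∨ y = -0.5 ∨ y = 0.5 ∨ j (adviceIndex d i ℓ) ≠ 0 ∧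
        (y = 0.1 * j (adviceIndex d i ℓ) - 1 ∨ y = 0.1 * j (adviceIndex d i ℓ) + 1)) := by
  rw [pointSet, Finset.mem_union, mem_core_iff]
  simp only [Finset.mem_biUnion, Finset.mem_univ, true_and]
  constructor
  · rintro (⟨i, hi, ℓ, y, rfl, hy⟩ | ⟨i, hi, ℓ, hp⟩)
    · exact ⟨i, hi, ℓ, y, rfl, by tauto⟩
    · split_ifs at hp with h0
      · simp at hp
      · simp only [Finset.mem_insert, Finset.mem_singleton] at hp
        rcases hp with rfl | rfl
        · exact ⟨i, hi, ℓ, _, rfl, Or.inr (Or.inr (Or.inr ⟨h0, Or.inl rfl⟩))⟩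
        · exact ⟨i, hi, ℓ, _, rfl, Or.inr (Or.inr (Or.inr ⟨h0, Or.inr rfl⟩))⟩
  · rintro ⟨i, hi, ℓ, y, rfl, hy | hy | hy | ⟨h0, hy⟩⟩
    · exact Or.inl ⟨i, hi, ℓ, y, rfl, Or.inl hy⟩
    · exact Or.inl ⟨i, hi, ℓ, y, rfl, Or.inr (Or.inl hy)⟩
    · exact Or.inl ⟨i, hi, ℓ, y, rfl, Or.inr (Or.inr hy)⟩
    · refine Or.inr ⟨i, hi, ℓ, ?_⟩
      simp only [adviceIndex] at h0 hy
      rw [if_neg h0]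
      rcases hy with rfl | rfl <;> simp

end Construction

section Blocks

variable (m : ℕ) {d : ℕ} (hd : 0 < d) (j : ℕ → ℤ)

def clusterIndices (m d : ℕ) (j : ℕ → ℤ) : Finset (ℕ × Option (Fin d)) :=
  (Finset.Icc 1 m ×ˢ Finset.univ).filter fun a => ∀ ℓ ∈ a.2, j (adviceIndex d a.1 ℓ) ≠ 0

lemma mem_clusterIndices {a : ℕ × Option (Fin d)} :
    a ∈ clusterIndices m d j ↔ a.1 ∈ Finset.Icc 1 m ∧ ∀ ℓ ∈ a.2, j (adviceIndex d a.1 ℓ) ≠ 0 := by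
  simp [clusterIndices]

noncomputable def farPoint : ℕ × Option (Fin d) → Fin d → ℝ
  | (i, none) => pt d hd (4 * i) ⟨0, hd⟩ 0
  | (i, some ℓ) => pt d hd (4 * i) ℓ (1.1 * j (adviceIndex d i ℓ))

/-- The clusters of an optimal clustering, one around each far point: of the offsets `y` along
`e_ℓ`, `|y + 0.4·j_k| ≤ 0.5` picks those that stay with the centre, `|y - 0.8·j_k| ≤ 0.3` the
pair `0.5·j_k, 1.1·j_k`. -/
def coverSet : ℕ × Option (Fin d) → Set (Fin d → ℝ)
  | (i, none) => {p | ∃ ℓ y, p = pt d hd (4 * i) ℓ y ∧ |y + 0.4 * j (adviceIndex d i ℓ)| ≤ 0.5}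
  | (i, some ℓ) => {p | ∃ y, p = pt d hd (4 * i) ℓ y ∧ |y - 0.8 * j (adviceIndex d i ℓ)| ≤ 0.3}

variable {j}

lemma abs_advice_le_one (hj : ∀ k, j k = -1 ∨ j k = 0 ∨ j k = 1) (k : ℕ) : |(j k : ℝ)| ≤ 1 := by
  rcases hj k with h | h | h <;> simp [h]

lemma eq_one_or_eq_neg_one_of_ne_zero (hj : ∀ k, j k = -1 ∨ j k = 0 ∨ j k = 1) {k : ℕ}
    (h0 : j k ≠ 0) : j k = 1 ∨ j k = -1 := by
  rcases hj k with h | h | h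
  exacts [Or.inr h, absurd h h0, Or.inl h]

lemma abs_farPoint_offset (hj : ∀ k, j k = -1 ∨ j k = 0 ∨ j k = 1) {k : ℕ} (h0 : j k ≠ 0) :
    |1.1 * (j k : ℝ)| = 1.1 := by
  rcases eq_one_or_eq_neg_one_of_ne_zero hj h0 with h | h <;> norm_num [h]

lemma dist_le_one_of_mem_coverSet (hj : ∀ k, j k = -1 ∨ j k = 0 ∨ j k = 1)
    (a : ℕ × Option (Fin d)) : ∀ x ∈ coverSet hd j a, ∀ x' ∈ coverSet hd j a, dist x x' ≤ 1 := by
  rcases a with ⟨i, _ | ℓ⟩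
  · rintro _ ⟨ℓ, y, rfl, hy⟩ _ ⟨ℓ', y', rfl, hy'⟩
    rcases eq_or_ne ℓ ℓ' with rfl | hne
    · rw [dist_pt_pt_self, abs_le]
      constructor <;> linarith [abs_le.1 hy, abs_le.1 hy']
    · rw [dist_pt_pt_of_ne hd _ hne]
      have hbound : ∀ {ℓ y}, |y + 0.4 * (j (adviceIndex d i ℓ) : ℝ)| ≤ 0.5 → |y| ≤ 1 := by
        intro ℓ y hy
        have := abs_sub (y + 0.4 * (j (adviceIndex d i ℓ) : ℝ)) (0.4 * j (adviceIndex d i ℓ))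
        rw [add_sub_cancel_right, abs_mul, abs_of_pos (by norm_num : (0 : ℝ) < 0.4)] at this
        linarith [abs_advice_le_one hj (adviceIndex d i ℓ)]
      exact max_le (hbound hy) (hbound hy')
  · rintro _ ⟨y, rfl, hy⟩ _ ⟨y', rfl, hy'⟩
    rw [dist_pt_pt_self, abs_le]
    constructor <;> linarith [abs_le.1 hy, abs_le.1 hy']

lemma exists_mem_coverSet (hj : ∀ k, j k = -1 ∨ j k = 0 ∨ j k = 1) {p : Fin d → ℝ}
    (hp : p ∈ pointSet m d hd j) : ∃ a ∈ clusterIndices m d j, p ∈ coverSet hd j a := by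
  obtain ⟨i, hi, ℓ, y, rfl, hy⟩ := (mem_pointSet_iff m hd j).1 hp
  by_cases hfar : j (adviceIndex d i ℓ) ≠ 0 ∧ 0 < y * j (adviceIndex d i ℓ)
  · refine ⟨(i, some ℓ), (mem_clusterIndices m j).2 ⟨hi, by simpa using hfar.1⟩, y, rfl, ?_⟩
    rcases hj (adviceIndex d i ℓ) with h | h | h <;> rw [h] at hy hfar ⊢ <;>
      rcases hy with rfl | rfl | rfl | ⟨-, rfl | rfl⟩ <;> revert hfar <;> norm_num [abs_le]
  · refine ⟨(i, none), (mem_clusterIndices m j).2 ⟨hi, by simp⟩, ℓ, y, rfl, ?_⟩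
    rcases hj (adviceIndex d i ℓ) with h | h | h <;> rw [h] at hy hfar ⊢ <;>
      rcases hy with rfl | rfl | rfl | ⟨h0, rfl | rfl⟩ <;> revert hfar <;> norm_num [abs_le] <;>
      exact h0 rfl

lemma minClustersPi_pointSet_le (hj : ∀ k, j k = -1 ∨ j k = 0 ∨ j k = 1) :
    minClustersPi d (pointSet m d hd j) ≤ (clusterIndices m d j).card := by
  refine (minClustersPi_le_card_of_cover ((clusterIndices m d j).image (coverSet hd j))
    ?_ ?_).trans Finset.card_image_le
  · intro G hG
    obtain ⟨a, -, rfl⟩ := Finset.mem_image.1 hG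
    exact dist_le_one_of_mem_coverSet hd hj a
  · intro p hp
    obtain ⟨a, ha, hpa⟩ := exists_mem_coverSet m hd hj hp
    exact ⟨_, Finset.mem_image_of_mem _ ha, hpa⟩

end Blocks

section FarPoints

variable (m : ℕ) {d : ℕ} (hd : 0 < d) {j : ℕ → ℤ}

lemma farPoint_mem_pointSet (hj : ∀ k, j k = -1 ∨ j k = 0 ∨ j k = 1)
    {a : ℕ × Option (Fin d)} (ha : a ∈ clusterIndices m d j) :
    farPoint hd j a ∈ pointSet m d hd j := by
  obtain ⟨hi, h0⟩ := (mem_clusterIndices m j).1 ha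
  rw [mem_pointSet_iff]
  rcases a with ⟨i, _ | ℓ⟩
  · exact ⟨i, hi, _, 0, rfl, Or.inl rfl⟩
  · have h0 := h0 ℓ rfl
    refine ⟨i, hi, ℓ, _, rfl, Or.inr (Or.inr (Or.inr ⟨h0, ?_⟩))⟩
    rcases eq_one_or_eq_neg_one_of_ne_zero hj h0 with h | h <;> simp only [h] <;> norm_num

lemma exists_farPoint_eq (hj : ∀ k, j k = -1 ∨ j k = 0 ∨ j k = 1) (a : ℕ × Option (Fin d)) :
    ∃ ℓ y, |y| ≤ 1.1 ∧ farPoint hd j a = pt d hd (4 * a.1) ℓ y := by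
  rcases a with ⟨i, _ | ℓ⟩
  · exact ⟨_, 0, by norm_num, rfl⟩
  · refine ⟨ℓ, _, ?_, rfl⟩
    rw [abs_mul]
    exact (mul_le_of_le_one_right (abs_nonneg _) (abs_advice_le_one hj _)).trans (by norm_num)

lemma pairwise_one_lt_dist_farPoint (hj : ∀ k, j k = -1 ∨ j k = 0 ∨ j k = 1) :
    (clusterIndices m d j : Set (ℕ × Option (Fin d))).Pairwise
      fun a b => 1 < dist (farPoint hd j a) (farPoint hd j b) := by
  rintro ⟨i, o⟩ ha ⟨i', o'⟩ hb hab
  obtain ⟨-, ha⟩ := (mem_clusterIndices m j).1 ha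
  obtain ⟨-, hb⟩ := (mem_clusterIndices m j).1 hb
  rcases eq_or_ne i i' with rfl | hii
  · rcases o with _ | ℓ <;> rcases o' with _ | ℓ'
    · exact absurd rfl hab
    · rw [farPoint, pt_zero_eq hd _ _ ℓ', farPoint, dist_pt_pt_self, zero_sub, abs_neg,
        abs_farPoint_offset hj (hb ℓ' rfl)]
      norm_num
    · rw [farPoint, farPoint, pt_zero_eq hd _ _ ℓ, dist_pt_pt_self, sub_zero,
        abs_farPoint_offset hj (ha ℓ rfl)]
      norm_num
    · have hne : ℓ ≠ ℓ' := fun h => hab (h ▸ rfl)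
      rw [farPoint, farPoint, dist_pt_pt_of_ne hd _ hne, abs_farPoint_offset hj (ha ℓ rfl)]
      norm_num
  · obtain ⟨ℓ, y, hy, hpt⟩ := exists_farPoint_eq hd hj (i, o)
    obtain ⟨ℓ', y', hy', hpt'⟩ := exists_farPoint_eq hd hj (i', o')
    rw [hpt, hpt']
    exact one_lt_dist_pt_pt_of_ne hd hii ℓ ℓ' hy hy'

lemma farPoint_eq_of_dist_le_one (hj : ∀ k, j k = -1 ∨ j k = 0 ∨ j k = 1) {i : ℕ} {ℓ : Fin d}
    {y : ℝ} (hy : |y| ≤ 1.1) (hyj : y * j (adviceIndex d i ℓ) ≤ 0) {a : ℕ × Option (Fin d)}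
    (ha : a ∈ clusterIndices m d j) (hdist : dist (pt d hd (4 * i) ℓ y) (farPoint hd j a) ≤ 1) :
    farPoint hd j a = pt d hd (4 * i) ⟨0, hd⟩ 0 := by
  obtain ⟨-, h0⟩ := (mem_clusterIndices m j).1 ha
  obtain ⟨ℓ', y', hy', hpt⟩ := exists_farPoint_eq hd hj a
  rcases a with ⟨i', o⟩
  obtain rfl : i = i' := by
    by_contra hii
    rw [hpt] at hdist
    exact (one_lt_dist_pt_pt_of_ne hd hii ℓ ℓ' hy hy').not_ge hdist
  rcases o with _ | ℓ'
  · rfl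
  · exfalso
    have h0 := h0 ℓ' rfl
    simp only [farPoint] at hdist
    rcases eq_or_ne ℓ ℓ' with rfl | hne
    · rw [dist_pt_pt_self] at hdist
      rcases eq_one_or_eq_neg_one_of_ne_zero hj h0 with h | h <;> rw [h] at hyj hdist <;>
        norm_num [abs_le] at hyj hdist <;> linarith [hdist.1, hdist.2]
    · rw [dist_pt_pt_of_ne hd _ hne, abs_farPoint_offset hj h0] at hdist
      norm_num at hdist

lemma exists_mem_center_of_optimal (hj : ∀ k, j k = -1 ∨ j k = 0 ∨ j k = 1)
    {𝒞 : Finset (Finset (Fin d → ℝ))} (h𝒞 : IsClusteringPi d (pointSet m d hd j) 𝒞)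
    (hopt : 𝒞.card = minClustersPi d (pointSet m d hd j)) {i : ℕ} {ℓ : Fin d} {y : ℝ}
    (hp : pt d hd (4 * i) ℓ y ∈ pointSet m d hd j) (hy : |y| ≤ 1.1)
    (hyj : y * j (adviceIndex d i ℓ) ≤ 0) :
    ∃ C ∈ 𝒞, pt d hd (4 * i) ⟨0, hd⟩ 0 ∈ C ∧ pt d hd (4 * i) ℓ y ∈ C := by
  obtain ⟨C, hC, hpC⟩ := (h𝒞.2 _ hp).exists
  obtain ⟨a, ha, haC⟩ := h𝒞.exists_apply_mem_of_card_le (fun _ => farPoint_mem_pointSet m hd hj)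
    (pairwise_one_lt_dist_farPoint m hd hj) (hopt ▸ minClustersPi_pointSet_le m hd hj) C hC
  have hcenter := farPoint_eq_of_dist_le_one m hd hj hy hyj ha ((h𝒞.1 C hC).2.2 _ hpC _ haC)
  exact ⟨C, hC, hcenter ▸ haC, hpC⟩

lemma exists_mem_center_and_half_iff (hj : ∀ k, j k = -1 ∨ j k = 0 ∨ j k = 1)
    {𝒞 : Finset (Finset (Fin d → ℝ))} (h𝒞 : IsClusteringPi d (pointSet m d hd j) 𝒞)
    (hopt : 𝒞.card = minClustersPi d (pointSet m d hd j)) {i : ℕ} (hi : i ∈ Finset.Icc 1 m)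
    (ℓ : Fin d) {s : ℤ} (hs : s = 1 ∨ s = -1) :
    (∃ C ∈ 𝒞, pt d hd (4 * i) ⟨0, hd⟩ 0 ∈ C ∧ pt d hd (4 * i) ℓ (0.5 * s) ∈ C) ↔
      j (adviceIndex d i ℓ) ≠ s := by
  constructor
  · rintro ⟨C, hC, hcC, hqC⟩ hjs
    have hp : pt d hd (4 * i) ℓ (-0.9 * s) ∈ pointSet m d hd j := by
      refine (mem_pointSet_iff m hd j).2 ⟨i, hi, ℓ, _, rfl, Or.inr (Or.inr (Or.inr ⟨?_, ?_⟩))⟩ <;>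
        rcases hs with rfl | rfl <;> rw [hjs] <;> norm_num
    obtain ⟨C', hC', hcC', hpC'⟩ := exists_mem_center_of_optimal m hd hj h𝒞 hopt hp
      (by rcases hs with rfl | rfl <;> norm_num)
      (by rcases hs with rfl | rfl <;> rw [hjs] <;> norm_num)
    obtain rfl := h𝒞.eq_of_mem hC hC' hcC hcC'
    have := (h𝒞.1 C hC).2.2 _ hqC _ hpC'
    rw [dist_pt_pt_self] at this
    rcases hs with rfl | rfl <;> norm_num at this
  · intro hjs
    have hq : pt d hd (4 * i) ℓ (0.5 * s) ∈ pointSet m d hd j :=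
      (mem_pointSet_iff m hd j).2 ⟨i, hi, ℓ, _, rfl, by rcases hs with rfl | rfl <;> norm_num⟩
    refine exists_mem_center_of_optimal m hd hj h𝒞 hopt hq
      (by rcases hs with rfl | rfl <;> norm_num) ?_
    rcases hj (adviceIndex d i ℓ) with h | h | h <;> rcases hs with rfl | rfl <;>
      rw [h] at hjs ⊢ <;> first | exact absurd rfl hjs | norm_num

end FarPoints

theorem stmt17_general (m d : ℕ) (hd : 0 < d) (j j' : ℕ → ℤ)
    (hj : ∀ k, j k = -1 ∨ j k = 0 ∨ j k = 1)
    (hj' : ∀ k, j' k = -1 ∨ j' k = 0 ∨ j' k = 1)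
    (hne : ∃ k, k < m * d ∧ j k ≠ j' k) :
    ¬ ∃ 𝒟 : Finset (Finset (Fin d → ℝ)),
      (∃ 𝒞, IsClusteringPi d (pointSet m d hd j) 𝒞 ∧
        𝒞.card = minClustersPi d (pointSet m d hd j) ∧ restrict d 𝒞 (core m d hd) = 𝒟) ∧
      (∃ 𝒞', IsClusteringPi d (pointSet m d hd j') 𝒞' ∧
        𝒞'.card = minClustersPi d (pointSet m d hd j') ∧ restrict d 𝒞' (core m d hd) = 𝒟) := by
  rintro ⟨_, ⟨𝒞, h𝒞, hopt, rfl⟩, 𝒞', h𝒞', hopt', h𝒟⟩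
  obtain ⟨k, hk, hjk⟩ := hne
  obtain ⟨s, hs, hjs⟩ : ∃ s : ℤ, (s = 1 ∨ s = -1) ∧ (j k = s ↔ j' k ≠ s) := by
    by_cases h0 : j k = 0
    · have h0' : j' k ≠ 0 := fun h => hjk (h0.trans h.symm)
      exact ⟨j' k, eq_one_or_eq_neg_one_of_ne_zero hj' h0', by simp [h0, h0'.symm]⟩
    · exact ⟨j k, eq_one_or_eq_neg_one_of_ne_zero hj h0, by simp [Ne.symm hjk]⟩
  obtain ⟨i, hi, ℓ, rfl⟩ := exists_adviceIndex_eq hk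
  have hc : pt d hd (4 * i) ⟨0, hd⟩ 0 ∈ core m d hd :=
    (mem_core_iff m hd).2 ⟨i, hi, _, 0, rfl, Or.inl rfl⟩
  have hq : pt d hd (4 * i) ℓ (0.5 * s) ∈ core m d hd :=
    (mem_core_iff m hd).2 ⟨i, hi, ℓ, _, rfl, by rcases hs with rfl | rfl <;> norm_num⟩
  have hj_iff := (exists_mem_restrict_iff 𝒞 hc hq).trans
    (exists_mem_center_and_half_iff m hd hj h𝒞 hopt hi ℓ hs)
  have hj'_iff := (exists_mem_restrict_iff 𝒞' hc hq).trans
    (exists_mem_center_and_half_iff m hd hj' h𝒞' hopt' hi ℓ hs)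
  rw [h𝒟] at hj'_iff
  exact iff_not_self (hjs.trans (hj_iff.symm.trans hj'_iff).symm)

/-- Distinct advice vectors `j ≠ j'` (in `{−1,0,1}^{md}`) yield point sets whose
optimal clusterings induce distinct clusterings on the common core: no clustering
of the core extends to an optimal clustering of both point sets. -/
theorem stmt17 (m d : ℕ) (hm : 1 ≤ m) (hd : 0 < d) (j j' : ℕ → ℤ)
    (hj : ∀ k, j k = -1 ∨ j k = 0 ∨ j k = 1)
    (hj' : ∀ k, j' k = -1 ∨ j' k = 0 ∨ j' k = 1)
    (hne : ∃ k, k < m * d ∧ j k ≠ j' k) :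
    ¬ ∃ 𝒟 : Finset (Finset (Fin d → ℝ)),
      (∃ 𝒞, IsClusteringPi d (pointSet m d hd j) 𝒞 ∧
        𝒞.card = minClustersPi d (pointSet m d hd j) ∧ restrict d 𝒞 (core m d hd) = 𝒟) ∧
      (∃ 𝒞', IsClusteringPi d (pointSet m d hd j') 𝒞' ∧
        𝒞'.card = minClustersPi d (pointSet m d hd j') ∧ restrict d 𝒞' (core m d hd) = 𝒟) :=
  stmt17_general m d hd j j' hj hj' hne
end
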